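/- For every m > 0 and every positive integer p, the equation tan(2√E) + √E/m = 0 has a unique solution E in the interval ((2p-1)²π²/16, p²π²/4). -/

import Mathlib

/-!
Put `t = 2√E - pπ`. By `π`-periodicity of `tan` the equation becomes `tan t + (t + pπ)/(2m) = 0`,
and `E ↦ t` maps the given interval bijectively onto `(-π/2, 0)`. There the left-hand side is
strictly increasing, tends to `-∞` as `t → -π/2⁺` and equals `pπ/(2m) > 0` at `t = 0`, so it has
exactly one zero.
-/

open Real Set Filter Topology

theorem Set.BijOn.existsUnique_iff {α β : Type*} {f : α → β} {s : Set α} {t : Set β}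
    {P : α → Prop} {Q : β → Prop} (hf : BijOn f s t) (hPQ : ∀ x ∈ s, P x ↔ Q (f x)) :
    (∃! x, x ∈ s ∧ P x) ↔ ∃! y, y ∈ t ∧ Q y := by
  constructor
  · rintro ⟨x, ⟨hx, hPx⟩, huniq⟩
    refine ⟨f x, ⟨hf.mapsTo hx, (hPQ x hx).1 hPx⟩, ?_⟩
    rintro _ ⟨hy, hQy⟩
    obtain ⟨x', hx', rfl⟩ := hf.surjOn hy
    rw [huniq x' ⟨hx', (hPQ x' hx').2 hQy⟩]
  · rintro ⟨_, ⟨hy, hQy⟩, huniq⟩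
    obtain ⟨x, hx, rfl⟩ := hf.surjOn hy
    refine ⟨x, ⟨hx, (hPQ x hx).2 hQy⟩, fun x' ⟨hx', hPx'⟩ => hf.injOn hx' hx ?_⟩
    exact huniq _ ⟨hf.mapsTo hx', (hPQ x' hx').1 hPx'⟩

theorem Real.bijOn_sqrt_Ioo {a b : ℝ} (ha : 0 ≤ a) (hab : a ≤ b) :
    BijOn (√·) (Ioo (a ^ 2) (b ^ 2)) (Ioo a b) := by
  refine ⟨fun x hx => ⟨(lt_sqrt ha).2 hx.1, (sqrt_lt' (by grind)).2 hx.2⟩,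
    fun x hx y hy hxy => ?_, fun y hy => ⟨y ^ 2, ?_, sqrt_sq (by grind)⟩⟩
  · exact (sqrt_inj (by nlinarith [hx.1]) (by nlinarith [hy.1])).1 hxy
  · exact ⟨pow_lt_pow_left₀ hy.1 ha two_ne_zero, pow_lt_pow_left₀ hy.2 (by grind) two_ne_zero⟩

theorem bijOn_two_mul_sub_Ioo (a b c : ℝ) :
    BijOn (fun x => 2 * x - c) (Ioo ((a + c) / 2) ((b + c) / 2)) (Ioo a b) :=
  ⟨fun x hx => ⟨by linarith [hx.1], by linarith [hx.2]⟩,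
    fun x _ y _ hxy => by linarith [show 2 * x - c = 2 * y - c from hxy],
    fun y hy => ⟨(y + c) / 2, ⟨by linarith [hy.1], by linarith [hy.2]⟩, by ring⟩⟩

theorem Real.existsUnique_tan_add_eq_zero {g : ℝ → ℝ} (hg : Continuous g) (hmono : Monotone g)
    (h0 : 0 < g 0) : ∃! t, t ∈ Ioo (-(π / 2)) 0 ∧ tan t + g t = 0 := by
  have hcont : ContinuousOn (fun t => tan t + g t) (Ioo (-(π / 2)) (π / 2)) :=
    continuousOn_tan_Ioo.add hg.continuousOn
  have hstrict : StrictMonoOn (fun t => tan t + g t) (Ioo (-(π / 2)) 0) :=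
    (strictMonoOn_tan.mono (Ioo_subset_Ioo_right (by linarith [pi_pos]))).add_monotone
      (hmono.monotoneOn _)
  have hbot : Tendsto (fun t => tan t + g t) (𝓝[>] (-(π / 2))) atBot :=
    tendsto_tan_neg_pi_div_two.atBot_add ((hg.tendsto _).mono_left nhdsWithin_le_nhds)
  obtain ⟨a, ha_neg, ha⟩ := ((hbot.eventually (eventually_lt_atBot 0)).and
    (Ioo_mem_nhdsGT (by linarith [pi_pos] : -(π / 2) < 0))).exists
  obtain ⟨t, ht, ht0⟩ : ∃ t ∈ Ioo a 0, tan t + g t = 0 := by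
    refine intermediate_value_Ioo ha.2.le (hcont.mono fun x hx => ?_) ⟨ha_neg, by simpa using h0⟩
    exact ⟨by linarith [ha.1, hx.1], by linarith [hx.2, pi_pos]⟩
  have ht' : t ∈ Ioo (-(π / 2)) 0 := ⟨ha.1.trans ht.1, ht.2⟩
  refine ⟨t, ⟨ht', ht0⟩, fun s ⟨hs, hs0⟩ => hstrict.injOn hs ht' ?_⟩
  simp only [hs0, ht0]

theorem unique_root_tan_eq (m : ℝ) (hm : 0 < m) (p : ℕ) (hp : 1 ≤ p) :
    ∃! E : ℝ, E ∈ Set.Ioo (((2 * p - 1 : ℝ))^2 * π^2 / 16) ((p : ℝ)^2 * π^2 / 4) ∧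
      Real.tan (2 * Real.sqrt E) + Real.sqrt E / m = 0 := by
  have hp' : (1 : ℝ) ≤ p := by exact_mod_cast hp
  have hlo : 0 ≤ (-(π / 2) + p * π) / 2 := by nlinarith [pi_pos]
  have hI : Ioo (((2 * p - 1 : ℝ)) ^ 2 * π ^ 2 / 16) ((p : ℝ) ^ 2 * π ^ 2 / 4) =
      Ioo (((-(π / 2) + p * π) / 2) ^ 2) (((0 + p * π) / 2) ^ 2) := by
    congr 1 <;> ring
  have hbij := (bijOn_two_mul_sub_Ioo (-(π / 2)) 0 (p * π)).comp
    (bijOn_sqrt_Ioo hlo (by linarith [pi_pos]))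
  rw [hI, hbij.existsUnique_iff (Q := fun t => tan t + (t + p * π) / (2 * m) = 0) fun E _ => ?_]
  · exact existsUnique_tan_add_eq_zero (g := fun t => (t + p * π) / (2 * m)) (by fun_prop)
      (fun _ _ hxy => by beta_reduce; gcongr) (by positivity)
  · simp only [Function.comp, tan_periodic.sub_nat_mul_eq, sub_add_cancel,
      mul_div_mul_left _ _ (two_ne_zero' ℝ)]
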